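/- Suppose α = α⁻¹ (i.e. α(x,y)² = 1 for all x,y ∈ G), and let 0 ≠ C = Re ≤ R = K[G,Θ,α] with e² = e. Then C is Euclidean self-dual, i.e. C = C^⊥, if and only if e·ê = 0 and 1̄ − ê = (1̄ − ê)·e. -/

import Mathlib

/-!
Because `α` is a normalized, `Θ(G)`-stable cocycle with `α = α⁻¹`, the Euclidean form satisfies
`⟨a b, c⟩ = ⟨a, c b̂⟩`. Hence `(Re)^⊥` is the left annihilator `{b | b ê = 0}`, and the adjoint
is anti-multiplicative, so `ê` is again idempotent and that annihilator is `R(1̄ - ê)`. As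
`Re = {x | x e = x}`, the equality `Re = (Re)^⊥` therefore amounts to `e ∈ (Re)^⊥`, i.e.
`e ê = 0`, together with `1̄ - ê ∈ Re`, i.e. `(1̄ - ê) e = 1̄ - ê`.
-/

open Finset

variable {K : Type*} {G : Type*}

/-- Multiplication of the twisted skew group ring `K[G,Θ,α]`:
`(Σ_g a_g ḡ)·(Σ_h b_h h̄) = Σ_{g,h} a_g·Θ(g)(b_h)·α(g,h)·(gh)‾`. -/
def tsMul [Field K] [Group G] [Fintype G] [DecidableEq G]
    (Θ : G →* RingAut K) (α : G → G → Kˣ) (a b : G → K) : G → K :=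
  fun x => ∑ p : G × G, if p.1 * p.2 = x then a p.1 * Θ p.1 (b p.2) * (α p.1 p.2 : K) else 0

/-- The identity element `1̄` of the twisted skew group ring. -/
def tsOne [Field K] [Group G] [DecidableEq G] : (G → K) := fun x => if x = 1 then 1 else 0

/-- The adjoint map `a ↦ â = Σ_g Θ(g⁻¹)(a_g)·α(g,g⁻¹)·(g⁻¹)‾`. -/
def tsAdj [Field K] [Group G] (Θ : G →* RingAut K) (α : G → G → Kˣ) (a : G → K) : G → K :=
  fun x => Θ x (a x⁻¹) * (α x⁻¹ x : K)

section TwistedSkewGroupRing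

variable [Field K] [Group G] [Fintype G] [DecidableEq G]
  (Θ : G →* RingAut K) (α : G → G → Kˣ)
variable (hnorm : ∀ g : G, α g 1 = 1 ∧ α 1 g = 1)
  (hcoc : ∀ g₁ g₂ g₃ : G, α g₁ (g₂ * g₃) * α g₂ g₃ = α (g₁ * g₂) g₃ * α g₁ g₂)
  (hstab : ∀ g x y : G, Θ g ((α x y : K)) = (α x y : K))
  (hα2 : ∀ x y : G, (α x y : K) ^ 2 = 1)

omit [Fintype G] [DecidableEq G] in
include hcoc in
lemma coe_cocycle (g₁ g₂ g₃ : G) :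
    (α g₁ (g₂ * g₃) : K) * α g₂ g₃ = α (g₁ * g₂) g₃ * α g₁ g₂ := by
  exact_mod_cast congrArg Units.val (hcoc g₁ g₂ g₃)

lemma tsMul_apply (a b : G → K) (x : G) :
    tsMul Θ α a b x = ∑ g : G, a g * Θ g (b (g⁻¹ * x)) * α g (g⁻¹ * x) := by
  rw [tsMul, Fintype.sum_prod_type]
  refine Finset.sum_congr rfl fun g _ => ?_
  simp_rw [← eq_inv_mul_iff_mul_eq]
  simp

lemma tsMul_sub_right (a b c : G → K) :
    tsMul Θ α a (b - c) = tsMul Θ α a b - tsMul Θ α a c := by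
  funext x
  simp only [tsMul_apply, Pi.sub_apply, map_sub, ← Finset.sum_sub_distrib]
  exact Finset.sum_congr rfl fun _ _ => by ring

lemma tsMul_sub_left (a b c : G → K) :
    tsMul Θ α (a - b) c = tsMul Θ α a c - tsMul Θ α b c := by
  funext x
  simp only [tsMul_apply, Pi.sub_apply, ← Finset.sum_sub_distrib]
  exact Finset.sum_congr rfl fun _ _ => by ring

lemma tsMul_zero_right (a : G → K) : tsMul Θ α a 0 = 0 := by
  funext x
  simp [tsMul]

include hnorm in
lemma tsMul_tsOne (a : G → K) : tsMul Θ α a tsOne = a := by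
  funext x
  rw [tsMul_apply, Finset.sum_eq_single x]
  · simp [tsOne, hnorm]
  · intro g _ hgx
    simp [tsOne, inv_mul_eq_one, hgx]
  · simp

include hnorm in
lemma tsOne_tsMul (a : G → K) : tsMul Θ α tsOne a = a := by
  funext x
  rw [tsMul_apply, Finset.sum_eq_single 1]
  · simp [tsOne, hnorm, RingAut.one_apply]
  · intro g _ hg
    simp [tsOne, hg]
  · simp

include hcoc hstab in
lemma tsMul_assoc (a b c : G → K) :
    tsMul Θ α (tsMul Θ α a b) c = tsMul Θ α a (tsMul Θ α b c) := by
  funext x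
  simp_rw [tsMul_apply, Finset.sum_mul, map_sum, Finset.mul_sum, Finset.sum_mul]
  rw [Finset.sum_comm]
  refine Finset.sum_congr rfl fun g _ => ?_
  rw [← Equiv.sum_comp (Equiv.mulLeft g)]
  refine Finset.sum_congr rfl fun h _ => ?_
  have hx : (g * h)⁻¹ * x = h⁻¹ * (g⁻¹ * x) := by group
  have hcoc' := coe_cocycle α hcoc g h (h⁻¹ * (g⁻¹ * x))
  rw [mul_inv_cancel_left] at hcoc'
  simp only [Equiv.coe_mulLeft, hx, inv_mul_cancel_left, map_mul, RingAut.mul_apply, hstab]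
  linear_combination (-(a g * Θ g (b h) * Θ g (Θ h (c (h⁻¹ * (g⁻¹ * x)))))) * hcoc'

omit [Fintype G] [DecidableEq G] in
include hnorm hcoc in
lemma alpha_inv_comm (w : G) : (α w w⁻¹ : K) = α w⁻¹ w := by
  simpa [hnorm] using (coe_cocycle α hcoc w w⁻¹ w).symm

omit [Fintype G] [DecidableEq G] in
include hnorm hcoc hα2 in
lemma alpha_inv_mul_alpha (u w : G) : (α w⁻¹ w : K) * α u w = α (u * w) w⁻¹ := by
  have h := coe_cocycle α hcoc u w w⁻¹
  simp only [mul_inv_cancel, hnorm, Units.val_one, one_mul] at h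
  rw [← alpha_inv_comm α hnorm hcoc, h, mul_assoc, ← sq, hα2, mul_one]

include hnorm hcoc hstab hα2 in
lemma tsMul_dotProduct (a b c : G → K) :
    tsMul Θ α a b ⬝ᵥ c = a ⬝ᵥ tsMul Θ α c (tsAdj Θ α b) := by
  simp_rw [dotProduct, tsMul_apply, Finset.sum_mul, Finset.mul_sum]
  rw [Finset.sum_comm]
  refine Finset.sum_congr rfl fun g _ => Finset.sum_congr rfl fun u _ => ?_
  have htwist := alpha_inv_mul_alpha α hnorm hcoc hα2 u (u⁻¹ * g)
  simp only [mul_inv_cancel_left, mul_inv_rev, inv_inv] at htwist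
  simp only [tsAdj, mul_inv_rev, inv_inv]
  rw [map_mul (Θ u), hstab, ← RingAut.mul_apply, ← map_mul, mul_inv_cancel_left]
  linear_combination (-(a g * Θ g (b (g⁻¹ * u)) * c u)) * htwist

include hnorm hcoc hstab hα2 in
lemma tsAdj_tsMul (a b : G → K) :
    tsAdj Θ α (tsMul Θ α a b) = tsMul Θ α (tsAdj Θ α b) (tsAdj Θ α a) := by
  refine dotProduct_eq _ _ fun u => ?_
  have move := tsMul_dotProduct Θ α hnorm hcoc hstab hα2
  rw [dotProduct_comm, ← tsOne_tsMul Θ α hnorm (tsAdj Θ α _), ← move,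
    ← tsMul_assoc Θ α hcoc hstab, move, tsOne_tsMul Θ α hnorm, move, dotProduct_comm]

include hcoc hstab in
lemma exists_eq_tsMul_iff {e : G → K} (he : tsMul Θ α e e = e) (x : G → K) :
    (∃ r, x = tsMul Θ α r e) ↔ tsMul Θ α x e = x := by
  refine ⟨?_, fun hx => ⟨x, hx.symm⟩⟩
  rintro ⟨r, rfl⟩
  rw [tsMul_assoc Θ α hcoc hstab, he]

include hnorm hcoc hstab hα2 in
lemma forall_sum_mul_eq_zero_iff (e b : G → K) :
    (∀ c : G → K, (∃ r, c = tsMul Θ α r e) → ∑ g, c g * b g = 0) ↔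
      tsMul Θ α b (tsAdj Θ α e) = 0 := by
  simp only [forall_exists_index, forall_eq_apply_imp_iff]
  refine Iff.trans ?_ dotProduct_eq_zero_iff
  refine forall_congr' fun r => ?_
  rw [← dotProduct, tsMul_dotProduct Θ α hnorm hcoc hstab hα2, dotProduct_comm]

end TwistedSkewGroupRing

theorem stmt16_general [Field K] [Group G] [Fintype G] [DecidableEq G]
    (Θ : G →* RingAut K) (α : G → G → Kˣ)
    (hnorm : ∀ g : G, α g 1 = 1 ∧ α 1 g = 1)
    (hcoc : ∀ g₁ g₂ g₃ : G, α g₁ (g₂ * g₃) * α g₂ g₃ = α (g₁ * g₂) g₃ * α g₁ g₂)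
    (hstab : ∀ g x y : G, Θ g ((α x y : K)) = (α x y : K))
    (hα2 : ∀ x y : G, (α x y : K) ^ 2 = 1)
    (e : G → K) (he : tsMul Θ α e e = e) :
    ({x : G → K | ∃ r : G → K, x = tsMul Θ α r e} =
        {b : G → K | ∀ c : G → K, (∃ r : G → K, c = tsMul Θ α r e) →
          ∑ g : G, c g * b g = 0}) ↔
      (tsMul Θ α e (tsAdj Θ α e) = 0 ∧
       tsOne - tsAdj Θ α e = tsMul Θ α (tsOne - tsAdj Θ α e) e) := by
  simp only [Set.ext_iff, Set.mem_ofPred_eq, forall_sum_mul_eq_zero_iff Θ α hnorm hcoc hstab hα2]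
  simp only [exists_eq_tsMul_iff Θ α hcoc hstab he]
  set ê := tsAdj Θ α e
  have assoc := tsMul_assoc Θ α hcoc hstab
  have hann : tsMul Θ α (tsOne - ê) ê = 0 := by
    rw [tsMul_sub_left, tsOne_tsMul Θ α hnorm, ← tsAdj_tsMul Θ α hnorm hcoc hstab hα2, he,
      sub_self]
  constructor
  · intro h
    exact ⟨(h e).1 he, ((h _).2 hann).symm⟩
  · rintro ⟨heê, hê⟩ x
    constructor
    · intro hx
      rw [← hx, assoc, heê, tsMul_zero_right]
    · intro hx
      have hx' : tsMul Θ α x (tsOne - ê) = x := by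
        rw [tsMul_sub_right, tsMul_tsOne Θ α hnorm, hx, sub_zero]
      rw [← hx', assoc, ← hê]

/-- Suppose `α = α⁻¹` and let `0 ≠ C = Re ≤ R = K[G,Θ,α]` with
`e² = e`.  Then `C` is Euclidean self-dual (`C = C^⊥`) iff `e·ê = 0` and
`1̄ − ê = (1̄ − ê)·e`. -/
theorem stmt16 [Field K] [Fintype K] [Group G] [Fintype G] [DecidableEq G]
    (Θ : G →* RingAut K) (α : G → G → Kˣ)
    (hnorm : ∀ g : G, α g 1 = 1 ∧ α 1 g = 1)
    (hcoc : ∀ g₁ g₂ g₃ : G, α g₁ (g₂ * g₃) * α g₂ g₃ = α (g₁ * g₂) g₃ * α g₁ g₂)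
    (hstab : ∀ g x y : G, Θ g ((α x y : K)) = (α x y : K))
    (hα2 : ∀ x y : G, (α x y : K) ^ 2 = 1)
    (e : G → K) (he : tsMul Θ α e e = e) (he0 : e ≠ 0) :
    ({x : G → K | ∃ r : G → K, x = tsMul Θ α r e} =
        {b : G → K | ∀ c : G → K, (∃ r : G → K, c = tsMul Θ α r e) →
          ∑ g : G, c g * b g = 0}) ↔
      (tsMul Θ α e (tsAdj Θ α e) = 0 ∧
       tsOne - tsAdj Θ α e = tsMul Θ α (tsOne - tsAdj Θ α e) e) :=
  stmt16_general Θ α hnorm hcoc hstab hα2 e he
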